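/- Let R be a commutative ring, M an R-module, y_1,...,y_r ∈ R, and I an ideal of R containing (y_1,...,y_r). Fix i > 0. If I · H_i(y_A; M) = 0 for all subsets A ⊆ {1,...,r}, then I · H_{i+1}(y_A; M) = 0 for all subsets A ⊆ {1,...,r}. -/

import Mathlib

open Finset

section Koszul

variable {R : Type*} [CommRing R] {ι : Type*} [LinearOrder ι]

/-- Koszul chains in homological degree `i` for the subfamily indexed by `A`:
functions from `i`-element subsets of `A` to `M`. -/
abbrev KChain (ι : Type*) (A : Finset ι) (M : Type*) (i : ℕ) :=
  {s : Finset ι // s ⊆ A ∧ s.card = i} → M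

variable {M : Type*} [AddCommGroup M] [Module R M]

/-- The Koszul differential from degree `i+1` to degree `i`. -/
noncomputable def kd (y : ι → R) (A : Finset ι) (i : ℕ) :
    KChain ι A M (i + 1) →ₗ[R] KChain ι A M i where
  toFun f t := ∑ j ∈ (A \ t.1).attach,
    ((-1 : ℤ) ^ ((t.1.filter (· < j.1)).card)) •
      y j.1 • f ⟨insert j.1 t.1, by
        obtain ⟨hjA, hjt⟩ := Finset.mem_sdiff.mp j.2
        exact ⟨Finset.insert_subset hjA t.2.1, by
          rw [Finset.card_insert_of_notMem hjt, t.2.2]⟩⟩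
  map_add' f g := by
    funext t
    simp [smul_add, Finset.sum_add_distrib]
  map_smul' r f := by
    funext t
    simp only [Pi.smul_apply, RingHom.id_apply]
    rw [Finset.smul_sum]
    refine Finset.sum_congr rfl fun j _ => ?_
    rw [smul_comm r, smul_comm r]

/-- Boundaries in homological degree `i`. -/
noncomputable def kBnd (y : ι → R) (A : Finset ι) (M : Type*) [AddCommGroup M] [Module R M]
    (i : ℕ) : Submodule R (KChain ι A M i) :=
  LinearMap.range (kd y A i)

/-- Cycles in homological degree `i`. -/
noncomputable def kCyc (y : ι → R) (A : Finset ι) (M : Type*) [AddCommGroup M] [Module R M] :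
    (i : ℕ) → Submodule R (KChain ι A M i)
  | 0 => ⊤
  | (i + 1) => LinearMap.ker (kd y A i)

/-- The `i`-th Koszul homology `H_i(y_A; M)` of `M` with respect to the subfamily
of `y` indexed by `A`. -/
abbrev KoszulH (y : ι → R) (A : Finset ι) (M : Type*) [AddCommGroup M] [Module R M] (i : ℕ) :=
  ↥(kCyc y A M i) ⧸ (kBnd y A M i).comap (kCyc y A M i).subtype

/-- The `j`-component of the canonical connecting map on cycles: the coefficient `z₁`
in the decomposition `z = z₀ + z₁ ∧ e j`. -/
noncomputable def delPart {ι : Type*} [LinearOrder ι] [DecidableEq ι] {N : Type*} [AddCommGroup N]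
    {i : ℕ} (A : Finset ι) (j : ι) (hj : j ∈ A)
    (z : KChain ι A N (i + 1)) : KChain ι (A.erase j) N i :=
  fun t => ((-1 : ℤ) ^ ((t.1.filter (j < ·)).card)) •
    z ⟨insert j t.1, ⟨Finset.insert_subset hj (t.2.1.trans (Finset.erase_subset _ _)),
      by
        rw [Finset.card_insert_of_notMem (fun h => (Finset.mem_erase.mp (t.2.1 h)).1 rfl),
          t.2.2]⟩⟩

end Koszul

/-!
Write a chain on `D` as `w = w₀ + w₁ ∧ e_m` with `w₀` supported on `D \ {m}` and
`w₁ = delPart D m w`. Assuming every `y_j` kills every `H_i(y_E; M)`, one proves by induction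
on `D`: a cycle `w` of degree `i + 1` all of whose contractions `delPart D m w` are boundaries is
itself a boundary. Indeed, if `kd χ = w₁`, then `w₀ ± y_m χ` is a cycle on `D \ {m}` differing from
`w` by the boundary of `χ ∧ e_m`, and its contractions are again boundaries: two lifts of the
double contraction of `w` differ by a cycle `v` of degree `i`, and `y_m v` is a boundary.
For `c ∈ I` and a cycle `z` of degree `i + 1`, the contractions of `c z` are `c` times cycles of
degree `i`, hence boundaries.
-/

lemma Finset.card_filter_insert_of_notMem {α : Type*} [DecidableEq α] {t : Finset α} {a : α}
    (ha : a ∉ t) (p : α → Prop) [DecidablePred p] :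
    #((insert a t).filter p) = #(t.filter p) + if p a then 1 else 0 := by
  rw [filter_insert]
  split_ifs
  · exact card_insert_of_notMem fun h => ha (mem_of_mem_filter _ h)
  · rfl

lemma Finset.card_filter_lt_add_card_filter_gt {ι : Type*} [LinearOrder ι] {t : Finset ι} {j : ι}
    (hj : j ∉ t) : #(t.filter (· < j)) + #(t.filter (j < ·)) = #t := by
  rw [← card_filter_add_card_filter_not (s := t) (p := (· < j))]
  congr 2
  exact filter_congr fun x hx => by rw [not_lt, (ne_of_mem_of_not_mem hx hj).symm.le_iff_lt]

lemma neg_one_pow_eq_of_add_eq {a b n : ℕ} (h : a + b = n) : (-1 : ℤ) ^ a = (-1) ^ (n + b) := by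
  rw [← h, add_assoc, pow_add, Even.neg_one_pow ⟨_, rfl⟩, mul_one]

namespace KChain

variable {ι : Type*} {M : Type*}

def restrict {A B : Finset ι} (h : B ⊆ A) {n : ℕ} (f : KChain ι A M n) : KChain ι B M n :=
  fun t => f ⟨t.1, t.2.1.trans h, t.2.2⟩

lemma restrict_add [Add M] {A B : Finset ι} (h : B ⊆ A) {n : ℕ} (f g : KChain ι A M n) :
    restrict h (f + g) = restrict h f + restrict h g :=
  rfl

lemma restrict_smul {S : Type*} [SMul S M] {A B : Finset ι} (h : B ⊆ A) {n : ℕ} (a : S)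
    (f : KChain ι A M n) : restrict h (a • f) = a • restrict h f :=
  rfl

lemma eq_zero_of_empty [Zero M] {n : ℕ} (f : KChain ι ∅ M (n + 1)) : f = 0 :=
  funext fun t => absurd t.2.2 (by rw [subset_empty.mp t.2.1]; simp)

variable [LinearOrder ι] [AddCommGroup M] {R : Type*} [CommRing R] [Module R M]

def extendZero {A : Finset ι} (j : ι) {n : ℕ} (f : KChain ι (A.erase j) M n) : KChain ι A M n :=
  fun t => if h : t.1 ⊆ A.erase j then f ⟨t.1, h, t.2.2⟩ else 0

/-- Exterior multiplication by `e j` from the right, a section of `delPart A j`. -/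
def wedge {A : Finset ι} (j : ι) {n : ℕ} (g : KChain ι (A.erase j) M n) :
    KChain ι A M (n + 1) :=
  fun s => if h : j ∈ s.1 then
    (-1 : ℤ) ^ #((s.1.erase j).filter (j < ·)) • g ⟨s.1.erase j,
      erase_subset_erase j s.2.1, by rw [card_erase_of_mem h, s.2.2]; rfl⟩
  else 0

/-- The summand of `kd` at index `l`, made independent of `l ∈ A \ t` so that sums over
different index sets can be compared. -/
noncomputable def kdTerm (y : ι → R) {A : Finset ι} {n : ℕ} (f : KChain ι A M (n + 1))
    (t : {s : Finset ι // s ⊆ A ∧ s.card = n}) (l : ι) : M :=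
  if h : l ∈ A \ t.1 then
    (-1 : ℤ) ^ #(t.1.filter (· < l)) •
      y l • f ⟨insert l t.1, insert_subset (mem_sdiff.mp h).1 t.2.1,
        by rw [card_insert_of_notMem (mem_sdiff.mp h).2, t.2.2]⟩
  else 0

lemma kd_apply (y : ι → R) {A : Finset ι} {n : ℕ} (f : KChain ι A M (n + 1))
    (t : {s : Finset ι // s ⊆ A ∧ s.card = n}) :
    kd y A n f t = ∑ l ∈ A \ t.1, kdTerm y f t l := by
  rw [← sum_attach]
  exact sum_congr rfl fun l _ => by rw [kdTerm, dif_pos l.2]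

lemma delPart_add {A : Finset ι} {j : ι} (hj : j ∈ A) {n : ℕ} (f g : KChain ι A M (n + 1)) :
    delPart A j hj (f + g) = delPart A j hj f + delPart A j hj g :=
  funext fun _ => smul_add _ _ _

lemma delPart_smul {S : Type*} [SMul S M] [SMulCommClass ℤ S M] {A : Finset ι} {j : ι}
    (hj : j ∈ A) {n : ℕ} (a : S) (f : KChain ι A M (n + 1)) :
    delPart A j hj (a • f) = a • delPart A j hj f :=
  funext fun _ => smul_comm _ _ _

lemma delPart_zero {A : Finset ι} {j : ι} (hj : j ∈ A) {n : ℕ} :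
    delPart A j hj (0 : KChain ι A M (n + 1)) = 0 :=
  funext fun _ => smul_zero _

lemma restrict_kd (y : ι → R) {A : Finset ι} {j : ι} (hj : j ∈ A) {n : ℕ}
    (f : KChain ι A M (n + 1)) :
    restrict (erase_subset j A) (kd y A n f) =
      kd y (A.erase j) n (restrict (erase_subset j A) f) +
        (-1 : ℤ) ^ n • y j • delPart A j hj f := by
  funext t
  have hjt : j ∉ t.1 := (subset_erase.mp t.2.1).2
  simp only [restrict, Pi.add_apply, Pi.smul_apply]
  rw [kd_apply, kd_apply, ← add_sum_erase _ _ (mem_sdiff.2 ⟨hj, hjt⟩), ← erase_sdiff_comm,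
    add_comm]
  congr 1
  · refine sum_congr rfl fun l hl => ?_
    have hl' : l ∈ A \ t.1 := sdiff_subset_sdiff (erase_subset j A) subset_rfl hl
    rw [kdTerm, kdTerm, dif_pos hl', dif_pos hl]
    rfl
  · have hcard := card_filter_lt_add_card_filter_gt hjt
    rw [t.2.2] at hcard
    rw [kdTerm, dif_pos (mem_sdiff.2 ⟨hj, hjt⟩), delPart, smul_comm (y j), smul_smul, ← pow_add,
      neg_one_pow_eq_of_add_eq hcard]

lemma delPart_kd (y : ι → R) {A : Finset ι} {j : ι} (hj : j ∈ A) {n : ℕ}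
    (f : KChain ι A M (n + 2)) :
    delPart A j hj (kd y A (n + 1) f) = kd y (A.erase j) n (delPart A j hj f) := by
  funext t
  have hjt : j ∉ t.1 := (subset_erase.mp t.2.1).2
  have hidx : A \ insert j t.1 = A.erase j \ t.1 := by
    rw [sdiff_insert, erase_sdiff_comm]
  simp only [delPart]
  rw [kd_apply, kd_apply, smul_sum, hidx]
  refine sum_congr rfl fun l hl => ?_
  obtain ⟨hlj, -⟩ := mem_erase.mp (mem_sdiff.mp hl).1
  have hlt : l ∉ t.1 := (mem_sdiff.mp hl).2
  rw [kdTerm, kdTerm, dif_pos (hidx ▸ hl), dif_pos hl, delPart, smul_comm (y l), smul_smul,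
    smul_smul, ← pow_add, ← pow_add, card_filter_insert_of_notMem hjt,
    card_filter_insert_of_notMem hlt, add_left_comm]
  congr 3
  exact Subtype.ext (insert_comm l j t.1)

lemma delPart_delPart {A : Finset ι} {j m : ι} (hjm : j ≠ m) (hj : j ∈ A) (hm : m ∈ A) {n : ℕ}
    (z : KChain ι A M (n + 2)) :
    delPart (A.erase m) j (mem_erase.mpr ⟨hjm, hj⟩) (delPart A m hm z) =
      -restrict (erase_right_comm (s := A) (a := j) (b := m)).ge
        (delPart (A.erase j) m (mem_erase.mpr ⟨hjm.symm, hm⟩) (delPart A j hj z)) := by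
  funext t
  have hjt : j ∉ t.1 := (subset_erase.mp t.2.1).2
  have hmt : m ∉ t.1 := fun h => (mem_erase.mp (mem_erase.mp (t.2.1 h)).2).1 rfl
  simp only [delPart, restrict, Pi.neg_apply]
  rw [smul_smul, smul_smul, ← pow_add, ← pow_add, card_filter_insert_of_notMem hjt,
    card_filter_insert_of_notMem hmt, ← neg_smul]
  simp only [insert_comm m j t.1]
  congr 1
  rcases hjm.lt_or_gt with hlt | hlt
  · rw [if_neg hlt.not_gt, if_pos hlt, add_zero]; ring
  · rw [if_pos hlt, if_neg hlt.not_gt, add_zero]; ring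

lemma kd_restrict_of_eq (y : ι → R) {A B : Finset ι} (h : A = B) {n : ℕ}
    (f : KChain ι A M (n + 1)) : kd y B n (restrict h.ge f) = restrict h.ge (kd y A n f) := by
  subst h
  rfl

lemma delPart_extendZero {A : Finset ι} {j : ι} (hj : j ∈ A) {n : ℕ}
    (g : KChain ι (A.erase j) M (n + 1)) : delPart A j hj (extendZero j g) = 0 := by
  funext t
  rw [delPart, extendZero, dif_neg fun h => (subset_erase.mp h).2 (mem_insert_self j t.1),
    smul_zero, Pi.zero_apply]

lemma restrict_extendZero {A : Finset ι} {j : ι} {n : ℕ} (g : KChain ι (A.erase j) M n) :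
    restrict (erase_subset j A) (extendZero j g) = g :=
  funext fun t => dif_pos t.2.1

lemma delPart_wedge {A : Finset ι} {j : ι} (hj : j ∈ A) {n : ℕ}
    (g : KChain ι (A.erase j) M (n + 1)) : delPart A j hj (wedge j g) = g := by
  funext t
  have hjt : j ∉ t.1 := (subset_erase.mp t.2.1).2
  simp only [delPart, wedge, dif_pos (mem_insert_self j t.1), erase_insert hjt]
  rw [smul_smul, ← pow_add, Even.neg_one_pow ⟨_, rfl⟩, one_smul]

lemma restrict_wedge {A : Finset ι} {j : ι} {n : ℕ} (g : KChain ι (A.erase j) M n) :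
    restrict (erase_subset j A) (wedge j g) = 0 :=
  funext fun t => dif_neg ((subset_erase.mp t.2.1).2)

lemma wedge_zero {A : Finset ι} (j : ι) {n : ℕ} : wedge j (0 : KChain ι (A.erase j) M n) = 0 :=
  funext fun s => by simp only [wedge, Pi.zero_apply, smul_zero, dite_eq_ite, ite_self]

lemma eq_extendZero_add_wedge {A : Finset ι} {j : ι} (hj : j ∈ A) {n : ℕ}
    (f : KChain ι A M (n + 1)) :
    f = extendZero j (restrict (erase_subset j A) f) + wedge j (delPart A j hj f) := by
  funext s
  simp only [Pi.add_apply, extendZero, wedge, restrict, delPart]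
  by_cases hjs : j ∈ s.1
  · rw [dif_neg fun h => (subset_erase.mp h).2 hjs, dif_pos hjs]
    simp only [insert_erase hjs]
    rw [smul_smul, ← pow_add, Even.neg_one_pow ⟨_, rfl⟩, one_smul, zero_add]
  · rw [dif_pos (subset_erase.mpr ⟨s.2.1, hjs⟩), dif_neg hjs, add_zero]

lemma extendZero_add {A : Finset ι} (j : ι) {n : ℕ} (f g : KChain ι (A.erase j) M n) :
    extendZero j (f + g) = extendZero j f + extendZero j g := by
  funext t
  simp only [extendZero, Pi.add_apply]
  split_ifs
  · rfl
  · rw [add_zero]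

lemma kd_extendZero (y : ι → R) {A : Finset ι} {j : ι} (hj : j ∈ A) {n : ℕ}
    (f : KChain ι (A.erase j) M (n + 2)) :
    kd y A (n + 1) (extendZero j f) = extendZero j (kd y (A.erase j) (n + 1) f) := by
  rw [eq_extendZero_add_wedge hj (kd y A (n + 1) (extendZero j f)), delPart_kd,
    delPart_extendZero, map_zero, restrict_kd y hj, restrict_extendZero, delPart_extendZero,
    smul_zero, smul_zero, add_zero, wedge_zero, add_zero]

lemma kd_wedge (y : ι → R) {A : Finset ι} {j : ι} (hj : j ∈ A) {n : ℕ}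
    (f : KChain ι (A.erase j) M (n + 1)) :
    kd y A (n + 1) (wedge j f) =
      extendZero j ((-1 : ℤ) ^ (n + 1) • y j • f) + wedge j (kd y (A.erase j) n f) := by
  rw [eq_extendZero_add_wedge hj (kd y A (n + 1) (wedge j f)), delPart_kd, delPart_wedge,
    restrict_kd y hj, restrict_wedge, map_zero, zero_add, delPart_wedge]

end KChain

section Koszul

open KChain

variable {ι : Type*} [LinearOrder ι] {M : Type*} [AddCommGroup M] {R : Type*} [CommRing R]
  [Module R M] (y : ι → R) {n : ℕ}

lemma mem_kCyc_succ {A : Finset ι} {v : KChain ι A M (n + 1)} :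
    v ∈ kCyc y A M (n + 1) ↔ kd y A n v = 0 :=
  LinearMap.mem_ker

lemma mem_kBnd {A : Finset ι} {v : KChain ι A M n} : v ∈ kBnd y A M n ↔ ∃ x, kd y A n x = v :=
  LinearMap.mem_range

lemma delPart_mem_kCyc {A : Finset ι} {j : ι} (hj : j ∈ A) {z : KChain ι A M (n + 2)}
    (hz : z ∈ kCyc y A M (n + 2)) : delPart A j hj z ∈ kCyc y (A.erase j) M (n + 1) := by
  rw [mem_kCyc_succ] at hz ⊢
  rw [← delPart_kd, hz, delPart_zero]

lemma forall_smul_koszulH_eq_zero_iff {A : Finset ι} {c : R} :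
    (∀ h : KoszulH y A M n, c • h = 0) ↔ ∀ v ∈ kCyc y A M n, c • v ∈ kBnd y A M n := by
  refine ⟨fun h v hv => ?_, fun h q => ?_⟩
  · have hv0 := h (Submodule.Quotient.mk ⟨v, hv⟩)
    rwa [← Submodule.Quotient.mk_smul, Submodule.Quotient.mk_eq_zero,
      Submodule.mem_comap] at hv0
  · induction q using Submodule.Quotient.induction_on with | H v => ?_
    rw [← Submodule.Quotient.mk_smul, Submodule.Quotient.mk_eq_zero, Submodule.mem_comap]
    exact h v.1 v.2

variable {D : Finset ι} {m : ι} {w : KChain ι D M (n + 2)} {χ : KChain ι (D.erase m) M (n + 2)}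

lemma kd_restrict_add_smul (hm : m ∈ D) (hχ : kd y (D.erase m) (n + 1) χ = delPart D m hm w) :
    kd y (D.erase m) (n + 1) (restrict (erase_subset m D) w + (-1 : ℤ) ^ (n + 1) • y m • χ) =
      restrict (erase_subset m D) (kd y D (n + 1) w) := by
  rw [map_add, map_zsmul, map_smul, hχ, restrict_kd y hm]

lemma extendZero_restrict_add_smul_add_kd_wedge (hm : m ∈ D)
    (hχ : kd y (D.erase m) (n + 1) χ = delPart D m hm w) :
    extendZero m (restrict (erase_subset m D) w + (-1 : ℤ) ^ (n + 1) • y m • χ) +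
      kd y D (n + 2) (wedge m χ) = w := by
  rw [kd_wedge y hm, hχ, ← add_assoc, ← extendZero_add, add_assoc, pow_succ (-1 : ℤ) (n + 1),
    mul_neg_one, neg_smul, add_neg_cancel, add_zero, ← eq_extendZero_add_wedge]

variable {y}

lemma delPart_restrict_add_smul_mem_kBnd
    (hy : ∀ (E : Finset ι) (j : ι), ∀ v ∈ kCyc y E M (n + 1), y j • v ∈ kBnd y E M (n + 1))
    (hm : m ∈ D) (hχ : kd y (D.erase m) (n + 1) χ = delPart D m hm w)
    {m' : ι} (hm' : m' ∈ D.erase m)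
    (hw : delPart D m' (mem_of_mem_erase hm') w ∈ kBnd y (D.erase m') M (n + 1)) :
    delPart (D.erase m) m' hm' (restrict (erase_subset m D) w + (-1 : ℤ) ^ (n + 1) • y m • χ) ∈
      kBnd y ((D.erase m).erase m') M (n + 1) := by
  obtain ⟨hm'm, hm'D⟩ := mem_erase.mp hm'
  have hmm' : m ∈ D.erase m' := mem_erase.mpr ⟨hm'm.symm, hm⟩
  have hcomm : (D.erase m').erase m = (D.erase m).erase m' := erase_right_comm
  obtain ⟨χ', hχ'⟩ := (mem_kBnd y).mp hw
  -- `delPart` anticommutes, so `χ'` and `χ` lift `delPart m (delPart m' w)` up to opposite signs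
  have hv : restrict hcomm.ge (delPart (D.erase m') m hmm' χ') + delPart (D.erase m) m' hm' χ ∈
      kCyc y ((D.erase m).erase m') M (n + 1) := by
    rw [mem_kCyc_succ, map_add, kd_restrict_of_eq y hcomm, ← delPart_kd, hχ', ← delPart_kd, hχ,
      delPart_delPart hm'm hm'D hm w]
    exact add_neg_cancel _
  obtain ⟨ψ, hψ⟩ := (mem_kBnd y).mp (hy _ m _ hv)
  refine (mem_kBnd y).mpr
    ⟨restrict hcomm.ge (restrict (erase_subset m (D.erase m')) χ') + (-1 : ℤ) ^ (n + 1) • ψ, ?_⟩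
  calc _ = restrict hcomm.ge (kd y _ (n + 1) (restrict (erase_subset m (D.erase m')) χ') +
          (-1 : ℤ) ^ (n + 1) • y m • delPart (D.erase m') m hmm' χ') +
        (-1 : ℤ) ^ (n + 1) • y m • delPart (D.erase m) m' hm' χ := by
        rw [map_add, map_zsmul, hψ, kd_restrict_of_eq y hcomm, smul_add, smul_add, restrict_add,
          restrict_smul, restrict_smul]
        exact (add_assoc _ _ _).symm
    _ = restrict hcomm.ge (restrict (erase_subset m (D.erase m')) (delPart D m' hm'D w)) +
        (-1 : ℤ) ^ (n + 1) • y m • delPart (D.erase m) m' hm' χ := by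
        rw [← restrict_kd y hmm', hχ']
    _ = _ := by
        rw [delPart_add, delPart_smul, delPart_smul]
        rfl

theorem mem_kBnd_of_forall_delPart_mem_kBnd
    (hy : ∀ (E : Finset ι) (j : ι), ∀ v ∈ kCyc y E M (n + 1), y j • v ∈ kBnd y E M (n + 1))
    (D : Finset ι) (w : KChain ι D M (n + 2)) (hw : w ∈ kCyc y D M (n + 2))
    (hdel : ∀ m (hm : m ∈ D), delPart D m hm w ∈ kBnd y (D.erase m) M (n + 1)) :
    w ∈ kBnd y D M (n + 2) := by
  induction D using Finset.strongInduction with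
  | H D ih =>
  rcases D.eq_empty_or_nonempty with rfl | ⟨m, hm⟩
  · rw [eq_zero_of_empty w]
    exact zero_mem _
  obtain ⟨χ, hχ⟩ := (mem_kBnd y).mp (hdel m hm)
  have hw' : restrict (erase_subset m D) w + (-1 : ℤ) ^ (n + 1) • y m • χ ∈
      kCyc y (D.erase m) M (n + 2) := by
    rw [mem_kCyc_succ, kd_restrict_add_smul y hm hχ, (mem_kCyc_succ y).mp hw]
    rfl
  obtain ⟨x, hx⟩ := (mem_kBnd y).mp <| ih _ (erase_ssubset hm) _ hw' fun m' hm' =>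
    delPart_restrict_add_smul_mem_kBnd hy hm hχ hm' (hdel m' _)
  refine (mem_kBnd y).mpr ⟨extendZero m x + wedge m χ, ?_⟩
  rw [map_add, kd_extendZero y hm, hx, extendZero_restrict_add_smul_add_kd_wedge y hm hχ]

end Koszul

/-- **Corollary (annihilation of Koszul homology propagates upwards).**
Let `R` be a commutative ring, `M` an `R`-module, `y 1, …, y r ∈ R` and `I` an ideal of `R`
containing `(y 1, …, y r)`.  Fix `i > 0`.  If `I • H_i(y_A; M) = 0` for all subsets
`A ⊆ {1,…,r}`, then `I • H_{i+1}(y_A; M) = 0` for all subsets `A ⊆ {1,…,r}`. -/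
theorem ideal_annihilates_next_koszul_homology
    {R : Type*} [CommRing R] {M : Type*} [AddCommGroup M] [Module R M]
    (r : ℕ) (y : Fin r → R) (I : Ideal R) (hyI : ∀ j, y j ∈ I) (i : ℕ) (hi : 0 < i)
    (hann : ∀ A : Finset (Fin r), ∀ c ∈ I, ∀ h : KoszulH y A M i, c • h = 0) :
    ∀ A : Finset (Fin r), ∀ c ∈ I, ∀ h : KoszulH y A M (i + 1), c • h = 0 := by
  obtain ⟨n, rfl⟩ := Nat.exists_eq_add_one_of_ne_zero hi.ne'
  have hcyc (A : Finset (Fin r)) (c : R) (hc : c ∈ I) :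
      ∀ v ∈ kCyc y A M (n + 1), c • v ∈ kBnd y A M (n + 1) :=
    (forall_smul_koszulH_eq_zero_iff y).mp (hann A c hc)
  intro A c hc
  refine (forall_smul_koszulH_eq_zero_iff y).mpr fun z hz => ?_
  refine mem_kBnd_of_forall_delPart_mem_kBnd (fun E j => hcyc E (y j) (hyI j)) A _
    (Submodule.smul_mem _ c hz) fun m hm => ?_
  rw [KChain.delPart_smul]
  exact hcyc _ c hc _ (delPart_mem_kCyc y hm hz)
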